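/- arXiv:1909.03897 — 2 statements merged into one kernel-verified Lean document; each statement's English description precedes it below -/
import Mathlib

section
/- Let L be a meet-semilattice with meet ⊓ and let E : L → ℝ be monotone nondecreasing. Define d(u, v) := E(u) + E(v) - 2·E(u ⊓ v). Assume the contraction property: for all u, v, w in L, d(u, v) ≥ d(u ⊓ w, v ⊓ w). Then d satisfies the triangle inequality: d(u, v) ≤ d(u, w) + d(w, v) for all u, v, w in L. -/
/-! Applying the contraction to the pair `u ⊓ w ≤ w`, cut by `v`, gives
`E (u ⊓ w) + E (w ⊓ v) ≤ E w + E (u ⊓ w ⊓ v)`, since on comparable pairs `d` is just the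
difference of energies. Monotonicity bounds `E (u ⊓ w ⊓ v)` by `E (u ⊓ v)`, and the resulting
inequality `E (u ⊓ w) + E (w ⊓ v) ≤ E w + E (u ⊓ v)` is the triangle inequality with the
definition of `d` unfolded. -/

section EnergyDistance

variable {L : Type*} [SemilatticeInf L] {E : L → ℝ} {d : L → L → ℝ}

theorem energyDist_eq_sub_of_le (hd : ∀ u v, d u v = E u + E v - 2 * E (u ⊓ v)) {a b : L}
    (hab : a ≤ b) : d a b = E b - E a := by
  rw [hd, inf_eq_left.mpr hab]
  ring

theorem energy_inf_add_energy_inf_le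
    (hd : ∀ u v, d u v = E u + E v - 2 * E (u ⊓ v))
    (hcontr : ∀ u v w : L, d (u ⊓ w) (v ⊓ w) ≤ d u v) (u v w : L) :
    E (u ⊓ w) + E (w ⊓ v) ≤ E w + E (u ⊓ w ⊓ v) := by
  have hcut := hcontr (u ⊓ w) w v
  rw [energyDist_eq_sub_of_le hd inf_le_right,
    energyDist_eq_sub_of_le hd (inf_le_inf_right v inf_le_right)] at hcut
  linarith

end EnergyDistance

theorem energy_dist_triangle {L : Type*} [SemilatticeInf L]
    (E : L → ℝ) (hE : Monotone E)
    (d : L → L → ℝ)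
    (hd : ∀ u v, d u v = E u + E v - 2 * E (u ⊓ v))
    (hcontr : ∀ u v w : L, d (u ⊓ w) (v ⊓ w) ≤ d u v)
    (u v w : L) :
    d u v ≤ d u w + d w v := by
  have hsub := energy_inf_add_energy_inf_le hd hcontr u v w
  have hmono : E (u ⊓ w ⊓ v) ≤ E (u ⊓ v) := hE (inf_le_inf_right v inf_le_left)
  rw [hd u v, hd u w, hd w v]
  linarith
end

section
/- Let L be a meet-semilattice with meet ⊓ and E : L → ℝ monotone nondecreasing, and define d(u, v) := E(u) + E(v) - 2·E(u ⊓ v). Suppose that L also has binary joins ⊔ and that for all u, v ∈ L: d(u ⊔ v, u) ≥ d(v, u ⊓ v). Then for all u, v, w ∈ L, d(u, v) ≥ d(u ⊓ w, v ⊓ w). -/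
/-!
Read through the formula for `d`, the max-inequality is exactly supermodularity of `E`:
`E a + E b ≤ E (a ⊔ b) + E (a ⊓ b)`. For a monotone supermodular `E` the marginal
`x ↦ E x - E (x ⊓ b)` is monotone, and the contraction is the sum of this fact for
`u ⊓ w ≤ u` (with `b = v`) and for `v ⊓ w ≤ v` (with `b = u`).
-/

theorem add_le_sup_add_inf_of_max_inequality {L : Type*} [Lattice L] (E : L → ℝ)
    (d : L → L → ℝ) (hd : ∀ u v, d u v = E u + E v - 2 * E (u ⊓ v))
    (hmax : ∀ u v : L, d v (u ⊓ v) ≤ d (u ⊔ v) u) (a b : L) :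
    E a + E b ≤ E (a ⊔ b) + E (a ⊓ b) := by
  have h := hmax a b
  rw [hd, hd, inf_of_le_right (inf_le_right : a ⊓ b ≤ b),
    inf_of_le_right (le_sup_left : a ≤ a ⊔ b)] at h
  linarith

theorem monotone_sub_inf_of_supermodular {L : Type*} [Lattice L] {E : L → ℝ}
    (hE : Monotone E) (hsuper : ∀ a b, E a + E b ≤ E (a ⊔ b) + E (a ⊓ b)) (b : L) :
    Monotone fun x => E x - E (x ⊓ b) := by
  intro x y hxy
  have hsup : E (x ⊔ y ⊓ b) ≤ E y := hE (sup_le hxy inf_le_left)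
  have hinf : x ⊓ (y ⊓ b) = x ⊓ b := by rw [← inf_assoc, inf_of_le_left hxy]
  have h := hsuper x (y ⊓ b)
  rw [hinf] at h
  dsimp only
  linarith

theorem energy_dist_contraction_of_max_inequality {L : Type*} [Lattice L]
    (E : L → ℝ) (hE : Monotone E)
    (d : L → L → ℝ)
    (hd : ∀ u v, d u v = E u + E v - 2 * E (u ⊓ v))
    (hmax : ∀ u v : L, d v (u ⊓ v) ≤ d (u ⊔ v) u)
    (u v w : L) :
    d (u ⊓ w) (v ⊓ w) ≤ d u v := by
  have hmono := monotone_sub_inf_of_supermodular hE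
    (add_le_sup_add_inf_of_max_inequality E d hd hmax)
  have hu : E (u ⊓ w) - E (u ⊓ v ⊓ w) ≤ E u - E (u ⊓ v) := by
    simpa only [inf_right_comm u w v] using hmono v (inf_le_left : u ⊓ w ≤ u)
  have hv : E (v ⊓ w) - E (u ⊓ v ⊓ w) ≤ E v - E (u ⊓ v) := by
    simpa only [inf_right_comm v w u, inf_comm v u] using hmono u (inf_le_left : v ⊓ w ≤ v)
  rw [hd, hd, ← inf_inf_distrib_right]
  linarith
end
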